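/- arXiv:2311.14479 — 7 statements merged into one kernel-verified Lean document; each statement's English description precedes it below -/
import Mathlib

section
/- Let T be a finite nonempty type, let Q_1, …, Q_n be strictly positive probability distributions on T, and let f_1, …, f_n : T → ℝ be weight functions such that there is a constant c > 0 with ∑_{i=1}^n f_i(x) = c for every x ∈ T. Define Z = ∑_{y ∈ T} exp((1/c) ∑_{i=1}^n f_i(y) log Q_i(y)) and P*(x) = exp((1/c) ∑_{i=1}^n f_i(x) log Q_i(x)) / Z. Then P* is a probability distribution on T, and for every probability distribution P on T we have ∑_{i=1}^n D_KL^{f_i}(P‖Q_i) ≥ ∑_{i=1}^n D_KL^{f_i}(P*‖Q_i), with equality if and only if P = P*. In particular P* is the unique minimizer of ∑_{i=1}^n D_KL^{f_i}(P‖Q_i) over all probability distributions P on T. -/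
open Finset

/-- Termwise Gibbs bound: `P x - R x ≤ P x * log (P x / R x)`, strict when `P x ≠ R x`. -/
private lemma gibbs_term {p r : ℝ} (hp : 0 ≤ p) (hr : 0 < r) :
    p - r ≤ p * Real.log (p / r) ∧ (p ≠ r → p - r < p * Real.log (p / r)) := by
  rcases eq_or_lt_of_le hp with h0 | hp'
  · have hp0 : p = 0 := h0.symm
    subst hp0
    simp only [zero_mul, zero_sub]
    exact ⟨by linarith, fun _ => by linarith⟩
  · have hkey : Real.log (r / p) ≤ r / p - 1 := Real.log_le_sub_one_of_pos (by positivity)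
    have hlog : Real.log (p / r) = -Real.log (r / p) := by
      rw [← Real.log_inv]; congr 1; field_simp
    have heq : p * (r / p - 1) = r - p := by field_simp
    constructor
    · have h1 := mul_le_mul_of_nonneg_left hkey (le_of_lt hp')
      rw [hlog]
      linarith [h1, heq]
    · intro hne
      have hne' : r / p ≠ 1 := by
        intro h
        apply hne
        field_simp at h
        linarith
      have hkey' : Real.log (r / p) < r / p - 1 :=
        (Real.log_lt_sub_one_of_pos (by positivity) hne')
      have h1 := mul_lt_mul_of_pos_left hkey' hp'
      rw [hlog]
      linarith [h1, heq]

/-- **Gibbs' inequality** over a finite type. -/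
private lemma gibbs {T : Type*} [Fintype T] (P R : T → ℝ)
    (hP : ∀ x, 0 ≤ P x) (hR : ∀ x, 0 < R x)
    (hP1 : ∑ x, P x = 1) (hR1 : ∑ x, R x = 1) :
    0 ≤ ∑ x, P x * Real.log (P x / R x) ∧
      (∑ x, P x * Real.log (P x / R x) = 0 ↔ P = R) := by
  have hterm : ∀ x : T, P x - R x ≤ P x * Real.log (P x / R x) :=
    fun x => (gibbs_term (hP x) (hR x)).1
  have hsum : (0:ℝ) = ∑ x, (P x - R x) := by
    rw [Finset.sum_sub_distrib, hP1, hR1]; ring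
  have hle : 0 ≤ ∑ x, P x * Real.log (P x / R x) := by
    rw [hsum]
    exact Finset.sum_le_sum fun x _ => hterm x
  refine ⟨hle, ⟨fun h => ?_, fun h => ?_⟩⟩
  · by_contra hne
    have : ∃ x, P x ≠ R x := by
      by_contra hall
      push_neg at hall
      exact hne (funext hall)
    obtain ⟨x0, hx0⟩ := this
    have hstrict : ∑ x, (P x - R x) < ∑ x, P x * Real.log (P x / R x) :=
      Finset.sum_lt_sum (fun x _ => hterm x)
        ⟨x0, Finset.mem_univ x0, (gibbs_term (hP x0) (hR x0)).2 hx0⟩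
    rw [← hsum, h] at hstrict
    exact lt_irrefl _ hstrict
  · subst h
    apply Finset.sum_eq_zero
    intro x _
    rw [div_self (ne_of_gt (hR x)), Real.log_one, mul_zero]

/-- **Weighted KL-optimality.** If the weight functions `f i` sum to a constant `c > 0`
at every token, then the softmax-style distribution `Pstar` is a probability distribution
minimizing `∑ i, D_KL^{f i}(P ‖ Q i)` over all probability distributions `P`, with equality
in the bound iff `P = Pstar`; in particular it is the unique minimizer. -/
theorem weighted_KL_optimality
    {T : Type*} [Fintype T] [Nonempty T] {n : ℕ}
    (Q : Fin n → T → ℝ) (f : Fin n → T → ℝ) (c : ℝ)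
    (hQpos : ∀ i x, 0 < Q i x) (hQsum : ∀ i, ∑ x, Q i x = 1)
    (hc : 0 < c) (hf : ∀ x, ∑ i, f i x = c)
    (Z : ℝ)
    (hZ : Z = ∑ y, Real.exp ((1 / c) * ∑ i, f i y * Real.log (Q i y)))
    (Pstar : T → ℝ)
    (hPstar : ∀ x, Pstar x =
      Real.exp ((1 / c) * ∑ i, f i x * Real.log (Q i x)) / Z) :
    ((∀ x, 0 ≤ Pstar x) ∧ ∑ x, Pstar x = 1) ∧
    (∀ P : T → ℝ, (∀ x, 0 ≤ P x) → ∑ x, P x = 1 →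
      (∑ i, ∑ x, P x * f i x * Real.log (P x / Q i x)) ≥
        (∑ i, ∑ x, Pstar x * f i x * Real.log (Pstar x / Q i x)) ∧
      ((∑ i, ∑ x, P x * f i x * Real.log (P x / Q i x)) =
        (∑ i, ∑ x, Pstar x * f i x * Real.log (Pstar x / Q i x)) ↔ P = Pstar)) := by
  set L : T → ℝ := fun x => (1 / c) * ∑ i, f i x * Real.log (Q i x) with hL
  have hZpos : 0 < Z := by
    rw [hZ]
    exact Finset.sum_pos (fun y _ => Real.exp_pos _) Finset.univ_nonempty
  have hPstarPos : ∀ x, 0 < Pstar x := by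
    intro x; rw [hPstar x]; positivity
  have hPstarSum : ∑ x, Pstar x = 1 := by
    simp only [hPstar]
    rw [← Finset.sum_div, ← hZ, div_self (ne_of_gt hZpos)]
  have hlogPstar : ∀ x, Real.log (Pstar x) = L x - Real.log Z := by
    intro x
    rw [hPstar x, Real.log_div (Real.exp_ne_zero _) (ne_of_gt hZpos), Real.log_exp]
  -- key algebraic identity
  have key : ∀ P : T → ℝ, (∀ x, 0 ≤ P x) → ∑ x, P x = 1 →
      (∑ i, ∑ x, P x * f i x * Real.log (P x / Q i x)) =
        c * (∑ x, P x * Real.log (P x / Pstar x)) - c * Real.log Z := by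
    intro P hPnn hP1
    rw [Finset.sum_comm]
    have hx : ∀ x : T, ∑ i, P x * f i x * Real.log (P x / Q i x) =
        c * (P x * Real.log (P x / Pstar x)) - c * Real.log Z * P x := by
      intro x
      rcases eq_or_lt_of_le (hPnn x) with h0 | hpx
      · simp [← h0]
      · have hlogdiv : ∀ i, Real.log (P x / Q i x) = Real.log (P x) - Real.log (Q i x) :=
          fun i => Real.log_div (ne_of_gt hpx) (ne_of_gt (hQpos i x))
        have hld2 : Real.log (P x / Pstar x) = Real.log (P x) - Real.log (Pstar x) :=
          Real.log_div (ne_of_gt hpx) (ne_of_gt (hPstarPos x))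
        have hLc : ∑ i, f i x * Real.log (Q i x) = c * L x := by
          simp only [hL]
          field_simp
        calc ∑ i, P x * f i x * Real.log (P x / Q i x)
            = ∑ i, ((P x * Real.log (P x)) * f i x - P x * (f i x * Real.log (Q i x))) := by
              refine Finset.sum_congr rfl fun i _ => ?_
              rw [hlogdiv i]; ring
          _ = (P x * Real.log (P x)) * (∑ i, f i x)
                - P x * ∑ i, f i x * Real.log (Q i x) := by
              rw [Finset.sum_sub_distrib, ← Finset.mul_sum, ← Finset.mul_sum]
          _ = P x * Real.log (P x) * c - P x * (c * L x) := by
              rw [hf x, hLc]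
          _ = c * (P x * Real.log (P x / Pstar x)) - c * Real.log Z * P x := by
              rw [hld2, hlogPstar x]; ring
    calc ∑ x, ∑ i, P x * f i x * Real.log (P x / Q i x)
        = ∑ x, (c * (P x * Real.log (P x / Pstar x)) - (c * Real.log Z) * P x) := by
          exact Finset.sum_congr rfl fun x _ => (hx x).trans (by ring)
      _ = c * (∑ x, P x * Real.log (P x / Pstar x)) - c * Real.log Z := by
          rw [Finset.sum_sub_distrib, ← Finset.mul_sum, ← Finset.mul_sum, hP1, mul_one]
  refine ⟨⟨fun x => le_of_lt (hPstarPos x), hPstarSum⟩, fun P hPnn hP1 => ?_⟩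
  have hG := gibbs P Pstar hPnn hPstarPos hP1 hPstarSum
  have hGstar := gibbs Pstar Pstar (fun x => le_of_lt (hPstarPos x)) hPstarPos hPstarSum hPstarSum
  have hstar0 : ∑ x, Pstar x * Real.log (Pstar x / Pstar x) = 0 := hGstar.2.mpr rfl
  have kP := key P hPnn hP1
  have kS := key Pstar (fun x => le_of_lt (hPstarPos x)) hPstarSum
  rw [hstar0] at kS
  constructor
  · rw [kP, kS]
    have := mul_le_mul_of_nonneg_left hG.1 (le_of_lt hc)
    linarith
  · rw [kP, kS]
    constructor
    · intro h
      apply hG.2.mp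
      have : c * (∑ x, P x * Real.log (P x / Pstar x)) = 0 := by linarith
      exact (mul_eq_zero.mp this).resolve_left (ne_of_gt hc)
    · intro h
      rw [hG.2.mpr h]
end

section
/- Let T be a finite nonempty type, let Q_1, …, Q_n be strictly positive probability distributions on T, and let f_1, …, f_n : T → ℝ be weight functions such that there is a constant c > 0 with ∑_{i=1}^n f_i(x) = c for every x ∈ T. Define Z = ∑_{y ∈ T} exp((1/c) ∑_{i=1}^n f_i(y) log Q_i(y)) and P*(x) = exp((1/c) ∑_{i=1}^n f_i(x) log Q_i(x)) / Z. Then for every probability distribution P on T, the objective decomposes as ∑_{i=1}^n D_KL^{f_i}(P‖Q_i) = c · D_KL(P‖P*) − c · log Z. -/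
open Finset

/-- **Decomposition of the weighted-KL objective.** With weight functions `f i` summing to
a constant `c > 0` at every token, and with `Pstar` the softmax-style distribution with
normalization constant `Z`, the objective decomposes for every probability distribution `P`
as `∑ i, D_KL^{f i}(P ‖ Q i) = c · D_KL(P ‖ Pstar) − c · log Z`. -/
theorem weighted_KL_decomposition
    {T : Type*} [Fintype T] [Nonempty T] {n : ℕ}
    (Q : Fin n → T → ℝ) (f : Fin n → T → ℝ) (c : ℝ)
    (hQpos : ∀ i x, 0 < Q i x) (hQsum : ∀ i, ∑ x, Q i x = 1)
    (hc : 0 < c) (hf : ∀ x, ∑ i, f i x = c)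
    (Z : ℝ)
    (hZ : Z = ∑ y, Real.exp ((1 / c) * ∑ i, f i y * Real.log (Q i y)))
    (Pstar : T → ℝ)
    (hPstar : ∀ x, Pstar x =
      Real.exp ((1 / c) * ∑ i, f i x * Real.log (Q i x)) / Z) :
    ∀ P : T → ℝ, (∀ x, 0 ≤ P x) → ∑ x, P x = 1 →
      (∑ i, ∑ x, P x * f i x * Real.log (P x / Q i x)) =
        c * (∑ x, P x * Real.log (P x / Pstar x)) - c * Real.log Z := by
  intro P hP hP1
  have hZpos : 0 < Z := by
    rw [hZ]; exact Finset.sum_pos (fun y _ => Real.exp_pos _) Finset.univ_nonempty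
  rw [Finset.sum_comm]
  have key : ∀ x, ∑ i, P x * f i x * Real.log (P x / Q i x) =
      c * (P x * Real.log (P x / Pstar x)) - c * (P x * Real.log Z) := by
    intro x
    rcases eq_or_lt_of_le (hP x) with h0 | hpos
    · simp [← h0]
    · have hPs := hPstar x
      have hlogPs : Real.log (Pstar x) =
          (1 / c) * ∑ i, f i x * Real.log (Q i x) - Real.log Z := by
        rw [hPs, Real.log_div (Real.exp_ne_zero _) (ne_of_gt hZpos), Real.log_exp]
      have hPsPos : 0 < Pstar x := by rw [hPs]; positivity
      calc ∑ i, P x * f i x * Real.log (P x / Q i x)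
          = P x * ∑ i, f i x * (Real.log (P x) - Real.log (Q i x)) := by
            rw [Finset.mul_sum]
            refine Finset.sum_congr rfl fun i _ => ?_
            rw [Real.log_div (ne_of_gt hpos) (ne_of_gt (hQpos i x))]; ring
        _ = P x * (c * Real.log (P x) - ∑ i, f i x * Real.log (Q i x)) := by
            simp only [mul_sub, Finset.sum_sub_distrib, ← Finset.sum_mul, hf x]
        _ = c * (P x * Real.log (P x / Pstar x)) - c * (P x * Real.log Z) := by
            rw [Real.log_div (ne_of_gt hpos) (ne_of_gt hPsPos), hlogPs]
            field_simp; ring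
  simp_rw [key]
  rw [Finset.sum_sub_distrib, ← Finset.mul_sum, ← Finset.mul_sum, ← Finset.sum_mul, hP1]
  ring
end

section
/- Let T be a finite nonempty type and let Q_1, Q_2 be strictly positive probability distributions on T. Define the indicator weights I_1(x) = 1 if Q_1(x) > Q_2(x) and I_1(x) = 0 otherwise, and I_2(x) = 1 − I_1(x). Then the unique probability distribution P on T minimizing D_KL^{I_1}(P‖Q_1) + D_KL^{I_2}(P‖Q_2) is the union distribution P*(x) = max(Q_1(x), Q_2(x)) / ∑_{y ∈ T} max(Q_1(y), Q_2(y)). -/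
open Finset

lemma gibbs_point {p q : ℝ} (hp : 0 ≤ p) (hq : 0 < q) :
    p - q ≤ p * Real.log (p / q) := by
  rcases eq_or_lt_of_le hp with h | h
  · simp [← h]; linarith
  · have h1 : Real.log (q / p) ≤ q / p - 1 :=
      Real.log_le_sub_one_of_pos (by positivity)
    have h2 : Real.log (p / q) = - Real.log (q / p) := by
      rw [← Real.log_inv]; congr 1; field_simp
    have h3 := mul_le_mul_of_nonneg_left h1 hp
    have h4 : p * (q / p - 1) = q - p := by field_simp
    rw [h2]; nlinarith

lemma gibbs_point_strict {p q : ℝ} (hp : 0 ≤ p) (hq : 0 < q) (hne : p ≠ q) :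
    p - q < p * Real.log (p / q) := by
  rcases eq_or_lt_of_le hp with h | h
  · simp [← h]; linarith
  · have hqp : q / p ≠ 1 := by
      intro hc
      exact hne (by field_simp at hc; linarith)
    have h1 : Real.log (q / p) < q / p - 1 :=
      Real.log_lt_sub_one_of_pos (by positivity) hqp
    have h2 : Real.log (p / q) = - Real.log (q / p) := by
      rw [← Real.log_inv]; congr 1; field_simp
    have h3 := mul_lt_mul_of_pos_left h1 h
    have h4 : p * (q / p - 1) = q - p := by field_simp
    rw [h2]; nlinarith

/-- **Union operator.** With indicator weights `I₁(x) = [Q₁ x > Q₂ x]` and `I₂ = 1 − I₁`,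
the unique probability distribution minimizing
`D_KL^{I₁}(P‖Q₁) + D_KL^{I₂}(P‖Q₂)` is the normalized pointwise maximum
`Pstar(x) = max (Q₁ x) (Q₂ x) / ∑ y, max (Q₁ y) (Q₂ y)`. -/
theorem union_operator_optimality
    {T : Type*} [Fintype T] [Nonempty T]
    (Q₁ Q₂ : T → ℝ)
    (hQ₁pos : ∀ x, 0 < Q₁ x) (hQ₁sum : ∑ x, Q₁ x = 1)
    (hQ₂pos : ∀ x, 0 < Q₂ x) (hQ₂sum : ∑ x, Q₂ x = 1)
    (I₁ I₂ : T → ℝ)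
    (hI₁ : ∀ x, I₁ x = if Q₂ x < Q₁ x then 1 else 0)
    (hI₂ : ∀ x, I₂ x = 1 - I₁ x)
    (Pstar : T → ℝ)
    (hPstar : ∀ x, Pstar x = max (Q₁ x) (Q₂ x) / ∑ y, max (Q₁ y) (Q₂ y)) :
    ((∀ x, 0 ≤ Pstar x) ∧ ∑ x, Pstar x = 1) ∧
    (∀ P : T → ℝ, (∀ x, 0 ≤ P x) → ∑ x, P x = 1 →
      (∑ x, Pstar x * I₁ x * Real.log (Pstar x / Q₁ x))
        + (∑ x, Pstar x * I₂ x * Real.log (Pstar x / Q₂ x)) ≤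
      (∑ x, P x * I₁ x * Real.log (P x / Q₁ x))
        + (∑ x, P x * I₂ x * Real.log (P x / Q₂ x))) ∧
    (∀ P : T → ℝ, (∀ x, 0 ≤ P x) → ∑ x, P x = 1 →
      (∀ P' : T → ℝ, (∀ x, 0 ≤ P' x) → ∑ x, P' x = 1 →
        (∑ x, P x * I₁ x * Real.log (P x / Q₁ x))
          + (∑ x, P x * I₂ x * Real.log (P x / Q₂ x)) ≤
        (∑ x, P' x * I₁ x * Real.log (P' x / Q₁ x))
          + (∑ x, P' x * I₂ x * Real.log (P' x / Q₂ x))) →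
      P = Pstar) := by
  set Z : ℝ := ∑ y, max (Q₁ y) (Q₂ y) with hZdef
  have hMpos : ∀ x, 0 < max (Q₁ x) (Q₂ x) := fun x => lt_max_of_lt_left (hQ₁pos x)
  have hZpos : 0 < Z := Finset.sum_pos (fun x _ => hMpos x) Finset.univ_nonempty
  have hPstarPos : ∀ x, 0 < Pstar x := by
    intro x; rw [hPstar x]; exact div_pos (hMpos x) hZpos
  have hPstarSum : ∑ x, Pstar x = 1 := by
    simp only [hPstar]
    rw [← Finset.sum_div]
    exact div_self hZpos.ne'
  -- Rewrite the objective
  have hF : ∀ P : T → ℝ, (∀ x, 0 ≤ P x) →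
      (∑ x, P x * I₁ x * Real.log (P x / Q₁ x))
        + (∑ x, P x * I₂ x * Real.log (P x / Q₂ x))
      = (∑ x, P x * Real.log (P x / Pstar x)) - (∑ x, P x) * Real.log Z := by
    intro P hP
    rw [← Finset.sum_add_distrib, Finset.sum_mul, ← Finset.sum_sub_distrib]
    apply Finset.sum_congr rfl
    intro x _
    rcases eq_or_lt_of_le (hP x) with hp | hp
    · simp [← hp]
    · have key : ∀ Q : T → ℝ, (0 < Q x) → max (Q₁ x) (Q₂ x) = Q x →
          P x * Real.log (P x / Q x)
            = P x * Real.log (P x / Pstar x) - P x * Real.log Z := by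
        intro Q hQ hmax
        have hps : P x / Pstar x = (P x / Q x) * Z := by
          rw [hPstar x, hmax]; field_simp
        rw [hps, Real.log_mul (by positivity) hZpos.ne']
        ring
      by_cases hx : Q₂ x < Q₁ x
      · rw [hI₂ x, hI₁ x, if_pos hx]
        have := key Q₁ (hQ₁pos x) (max_eq_left hx.le)
        simp only [mul_one, mul_zero, zero_mul, sub_self, add_zero]
        linarith [this]
      · rw [hI₂ x, hI₁ x, if_neg hx]
        have := key Q₂ (hQ₂pos x) (max_eq_right (not_lt.mp hx))
        simp only [mul_one, mul_zero, zero_mul, sub_zero, zero_add]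
        linarith [this]
  -- value at Pstar
  have hFstar :
      (∑ x, Pstar x * I₁ x * Real.log (Pstar x / Q₁ x))
        + (∑ x, Pstar x * I₂ x * Real.log (Pstar x / Q₂ x)) = - Real.log Z := by
    rw [hF Pstar (fun x => (hPstarPos x).le), hPstarSum]
    have : ∀ x ∈ Finset.univ, Pstar x * Real.log (Pstar x / Pstar x) = 0 := by
      intro x _
      rw [div_self (hPstarPos x).ne', Real.log_one, mul_zero]
    rw [Finset.sum_congr rfl this]
    simp
  -- Gibbs inequality: KL(P, Pstar) ≥ 0
  have hKL : ∀ P : T → ℝ, (∀ x, 0 ≤ P x) → ∑ x, P x = 1 →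
      0 ≤ ∑ x, P x * Real.log (P x / Pstar x) := by
    intro P hP hPs
    have h1 : ∑ x, (P x - Pstar x) ≤ ∑ x, P x * Real.log (P x / Pstar x) :=
      Finset.sum_le_sum (fun x _ => gibbs_point (hP x) (hPstarPos x))
    rwa [Finset.sum_sub_distrib, hPs, hPstarSum, sub_self] at h1
  refine ⟨⟨fun x => (hPstarPos x).le, hPstarSum⟩, ?_, ?_⟩
  · intro P hP hPs
    rw [hFstar, hF P hP, hPs, one_mul]
    linarith [hKL P hP hPs]
  · intro P hP hPs hmin
    have hle := hmin Pstar (fun x => (hPstarPos x).le) hPstarSum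
    rw [hFstar, hF P hP, hPs, one_mul] at hle
    have hKLle : ∑ x, P x * Real.log (P x / Pstar x) ≤ 0 := by linarith
    by_contra hne
    obtain ⟨x₀, hx₀⟩ := Function.ne_iff.mp hne
    have hlt : ∑ x, (P x - Pstar x) < ∑ x, P x * Real.log (P x / Pstar x) := by
      apply Finset.sum_lt_sum (fun x _ => gibbs_point (hP x) (hPstarPos x))
      exact ⟨x₀, Finset.mem_univ x₀, gibbs_point_strict (hP x₀) (hPstarPos x₀) hx₀⟩
    rw [Finset.sum_sub_distrib, hPs, hPstarSum, sub_self] at hlt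
    linarith
end

section
/- Let T be a finite nonempty type and let Q_1, Q_2 be strictly positive probability distributions on T. Define the indicator weights I_1(x) = 1 if Q_1(x) > Q_2(x) and I_1(x) = 0 otherwise, and I_2(x) = 1 − I_1(x). Then the unique probability distribution P on T minimizing D_KL^{I_2}(P‖Q_1) + D_KL^{I_1}(P‖Q_2) is the intersection distribution P*(x) = min(Q_1(x), Q_2(x)) / ∑_{y ∈ T} min(Q_1(y), Q_2(y)). -/
/-!
On each point the weights `I₁, I₂` select the smaller of `Q₁ x, Q₂ x`, so the objective is the
single sum `∑ P log (P / M)` with `M = min Q₁ Q₂`. Writing `M = Z • P*` with `Z = ∑ M`, this is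
`KL(P ‖ P*) - log Z` for every probability vector `P`, and Gibbs' inequality (with its equality
case) shows that `P*` is the unique minimizer. Gibbs' inequality itself comes from writing
`KL(P ‖ Q) = ∑ Q · klFun (P / Q)`, a sum of nonnegative terms that vanish only where `P = Q`.
-/

open Finset Real InformationTheory

lemma mul_klFun_div {p q : ℝ} (hq : q ≠ 0) :
    q * klFun (p / q) = p * log (p / q) + q - p := by
  rw [klFun_apply]
  field_simp

section Gibbs

variable {T : Type*} [Fintype T] {P Q : T → ℝ}

lemma sum_mul_log_div_eq_sum_mul_klFun (hQ : ∀ x, Q x ≠ 0) (hsum : ∑ x, P x = ∑ x, Q x) :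
    ∑ x, P x * log (P x / Q x) = ∑ x, Q x * klFun (P x / Q x) := by
  simp only [mul_klFun_div (hQ _), sum_sub_distrib, sum_add_distrib, hsum]
  ring

lemma sum_mul_log_div_nonneg (hP : ∀ x, 0 ≤ P x) (hQ : ∀ x, 0 < Q x)
    (hsum : ∑ x, P x = ∑ x, Q x) : 0 ≤ ∑ x, P x * log (P x / Q x) := by
  rw [sum_mul_log_div_eq_sum_mul_klFun (fun x => (hQ x).ne') hsum]
  exact sum_nonneg fun x _ => mul_nonneg (hQ x).le (klFun_nonneg (div_nonneg (hP x) (hQ x).le))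

lemma eq_of_sum_mul_log_div_nonpos (hP : ∀ x, 0 ≤ P x) (hQ : ∀ x, 0 < Q x)
    (hsum : ∑ x, P x = ∑ x, Q x) (hle : ∑ x, P x * log (P x / Q x) ≤ 0) : P = Q := by
  have hterm : ∀ x, 0 ≤ Q x * klFun (P x / Q x) := fun x =>
    mul_nonneg (hQ x).le (klFun_nonneg (div_nonneg (hP x) (hQ x).le))
  have hzero : ∑ x, Q x * klFun (P x / Q x) = 0 := by
    rw [← sum_mul_log_div_eq_sum_mul_klFun (fun x => (hQ x).ne') hsum]
    exact hle.antisymm (sum_mul_log_div_nonneg hP hQ hsum)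
  funext x
  have hx := (sum_eq_zero_iff_of_nonneg fun x _ => hterm x).mp hzero x (mem_univ x)
  rw [mul_eq_zero, or_iff_right (hQ x).ne',
    klFun_eq_zero_iff (div_nonneg (hP x) (hQ x).le)] at hx
  exact (div_eq_one_iff_eq (hQ x).ne').mp hx

lemma sum_mul_log_div_div_const (P M : T → ℝ) {c : ℝ} (hM : ∀ x, M x ≠ 0) (hc : c ≠ 0) :
    ∑ x, P x * log (P x / (M x / c)) = ∑ x, P x * log (P x / M x) + (∑ x, P x) * log c := by
  rw [sum_mul, ← sum_add_distrib]
  refine sum_congr rfl fun x _ => ?_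
  rcases eq_or_ne (P x) 0 with hPx | hPx
  · simp [hPx]
  · rw [div_div_eq_mul_div, mul_div_right_comm, log_mul (div_ne_zero hPx (hM x)) hc]
    ring

variable [Nonempty T] {M : T → ℝ}

lemma sum_div_sum_self (hM : ∀ x, 0 < M x) : ∑ x, M x / ∑ y, M y = 1 := by
  rw [← sum_div, div_self (sum_pos (fun x _ => hM x) univ_nonempty).ne']

lemma div_sum_self_pos (hM : ∀ x, 0 < M x) (x : T) : 0 < M x / ∑ y, M y :=
  div_pos (hM x) (sum_pos (fun x _ => hM x) univ_nonempty)

lemma sum_mul_log_div_eq_sub_log_sum (hM : ∀ x, 0 < M x) (hP : ∑ x, P x = 1) :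
    ∑ x, P x * log (P x / M x)
      = ∑ x, P x * log (P x / (M x / ∑ y, M y)) - log (∑ y, M y) := by
  rw [sum_mul_log_div_div_const P M (fun x => (hM x).ne')
    (sum_pos (fun x _ => hM x) univ_nonempty).ne', hP]
  ring

lemma sum_div_sum_self_mul_log_div (hM : ∀ x, 0 < M x) :
    ∑ x, M x / (∑ y, M y) * log (M x / (∑ y, M y) / M x) = -log (∑ y, M y) := by
  rw [sum_mul_log_div_eq_sub_log_sum hM (sum_div_sum_self hM)]
  simp [div_self (div_sum_self_pos hM _).ne']

lemma sum_div_sum_self_mul_log_div_le (hM : ∀ x, 0 < M x) (hP : ∀ x, 0 ≤ P x)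
    (hPsum : ∑ x, P x = 1) :
    ∑ x, M x / (∑ y, M y) * log (M x / (∑ y, M y) / M x) ≤ ∑ x, P x * log (P x / M x) := by
  rw [sum_mul_log_div_eq_sub_log_sum hM hPsum, sum_div_sum_self_mul_log_div hM]
  linarith [sum_mul_log_div_nonneg hP (div_sum_self_pos hM)
    (hPsum.trans (sum_div_sum_self hM).symm)]

lemma eq_div_sum_self_of_sum_mul_log_div_le (hM : ∀ x, 0 < M x) (hP : ∀ x, 0 ≤ P x)
    (hPsum : ∑ x, P x = 1)
    (hle : ∑ x, P x * log (P x / M x)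
      ≤ ∑ x, M x / (∑ y, M y) * log (M x / (∑ y, M y) / M x)) :
    P = fun x => M x / ∑ y, M y := by
  rw [sum_mul_log_div_eq_sub_log_sum hM hPsum, sum_div_sum_self_mul_log_div hM] at hle
  exact eq_of_sum_mul_log_div_nonpos hP (div_sum_self_pos hM)
    (hPsum.trans (sum_div_sum_self hM).symm) (by linarith)

end Gibbs

lemma mul_log_div_add_mul_log_div_eq_min (p q₁ q₂ : ℝ) :
    p * (1 - if q₂ < q₁ then 1 else 0) * log (p / q₁)
      + p * (if q₂ < q₁ then 1 else 0) * log (p / q₂) = p * log (p / min q₁ q₂) := by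
  split_ifs with h
  · rw [min_eq_right h.le]; ring
  · rw [min_eq_left (not_lt.mp h)]; ring

theorem intersection_operator_optimality_general
    {T : Type*} [Fintype T] [Nonempty T]
    (Q₁ Q₂ : T → ℝ)
    (hQ₁pos : ∀ x, 0 < Q₁ x)
    (hQ₂pos : ∀ x, 0 < Q₂ x)
    (I₁ I₂ : T → ℝ)
    (hI₁ : ∀ x, I₁ x = if Q₂ x < Q₁ x then 1 else 0)
    (hI₂ : ∀ x, I₂ x = 1 - I₁ x)
    (Pstar : T → ℝ)
    (hPstar : ∀ x, Pstar x = min (Q₁ x) (Q₂ x) / ∑ y, min (Q₁ y) (Q₂ y)) :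
    ((∀ x, 0 ≤ Pstar x) ∧ ∑ x, Pstar x = 1) ∧
    (∀ P : T → ℝ, (∀ x, 0 ≤ P x) → ∑ x, P x = 1 →
      (∑ x, Pstar x * I₂ x * Real.log (Pstar x / Q₁ x))
        + (∑ x, Pstar x * I₁ x * Real.log (Pstar x / Q₂ x)) ≤
      (∑ x, P x * I₂ x * Real.log (P x / Q₁ x))
        + (∑ x, P x * I₁ x * Real.log (P x / Q₂ x))) ∧
    (∀ P : T → ℝ, (∀ x, 0 ≤ P x) → ∑ x, P x = 1 →
      (∀ P' : T → ℝ, (∀ x, 0 ≤ P' x) → ∑ x, P' x = 1 →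
        (∑ x, P x * I₂ x * Real.log (P x / Q₁ x))
          + (∑ x, P x * I₁ x * Real.log (P x / Q₂ x)) ≤
        (∑ x, P' x * I₂ x * Real.log (P' x / Q₁ x))
          + (∑ x, P' x * I₁ x * Real.log (P' x / Q₂ x))) →
      P = Pstar) := by
  set M : T → ℝ := fun x => min (Q₁ x) (Q₂ x)
  have hM : ∀ x, 0 < M x := fun x => lt_min (hQ₁pos x) (hQ₂pos x)
  obtain rfl : Pstar = fun x => M x / ∑ y, M y := funext hPstar
  have hobjective : ∀ P : T → ℝ,
      (∑ x, P x * I₂ x * log (P x / Q₁ x)) + (∑ x, P x * I₁ x * log (P x / Q₂ x))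
        = ∑ x, P x * log (P x / M x) := fun P => by
    simp only [← sum_add_distrib, hI₂, hI₁, mul_log_div_add_mul_log_div_eq_min, M]
  have hPstar_nonneg : ∀ x, 0 ≤ M x / ∑ y, M y := fun x => (div_sum_self_pos hM x).le
  refine ⟨⟨hPstar_nonneg, sum_div_sum_self hM⟩, fun P hP hPsum => ?_, fun P hP hPsum hmin => ?_⟩
  · simpa only [hobjective] using sum_div_sum_self_mul_log_div_le hM hP hPsum
  · have hle := hmin _ hPstar_nonneg (sum_div_sum_self hM)
    simp only [hobjective] at hle
    exact eq_div_sum_self_of_sum_mul_log_div_le hM hP hPsum hle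

/-- **Intersection operator.** With indicator weights `I₁(x) = [Q₁ x > Q₂ x]` and
`I₂ = 1 − I₁`, the unique probability distribution minimizing
`D_KL^{I₂}(P‖Q₁) + D_KL^{I₁}(P‖Q₂)` is the normalized pointwise minimum
`Pstar(x) = min (Q₁ x) (Q₂ x) / ∑ y, min (Q₁ y) (Q₂ y)`. -/
theorem intersection_operator_optimality
    {T : Type*} [Fintype T] [Nonempty T]
    (Q₁ Q₂ : T → ℝ)
    (hQ₁pos : ∀ x, 0 < Q₁ x) (hQ₁sum : ∑ x, Q₁ x = 1)
    (hQ₂pos : ∀ x, 0 < Q₂ x) (hQ₂sum : ∑ x, Q₂ x = 1)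
    (I₁ I₂ : T → ℝ)
    (hI₁ : ∀ x, I₁ x = if Q₂ x < Q₁ x then 1 else 0)
    (hI₂ : ∀ x, I₂ x = 1 - I₁ x)
    (Pstar : T → ℝ)
    (hPstar : ∀ x, Pstar x = min (Q₁ x) (Q₂ x) / ∑ y, min (Q₁ y) (Q₂ y)) :
    ((∀ x, 0 ≤ Pstar x) ∧ ∑ x, Pstar x = 1) ∧
    (∀ P : T → ℝ, (∀ x, 0 ≤ P x) → ∑ x, P x = 1 →
      (∑ x, Pstar x * I₂ x * Real.log (Pstar x / Q₁ x))
        + (∑ x, Pstar x * I₁ x * Real.log (Pstar x / Q₂ x)) ≤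
      (∑ x, P x * I₂ x * Real.log (P x / Q₁ x))
        + (∑ x, P x * I₁ x * Real.log (P x / Q₂ x))) ∧
    (∀ P : T → ℝ, (∀ x, 0 ≤ P x) → ∑ x, P x = 1 →
      (∀ P' : T → ℝ, (∀ x, 0 ≤ P' x) → ∑ x, P' x = 1 →
        (∑ x, P x * I₂ x * Real.log (P x / Q₁ x))
          + (∑ x, P x * I₁ x * Real.log (P x / Q₂ x)) ≤
        (∑ x, P' x * I₂ x * Real.log (P' x / Q₁ x))
          + (∑ x, P' x * I₁ x * Real.log (P' x / Q₂ x))) →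
      P = Pstar) :=
  intersection_operator_optimality_general Q₁ Q₂ hQ₁pos hQ₂pos I₁ I₂ hI₁ hI₂ Pstar hPstar
end

section
/- Let T be a finite nonempty type and let P_1, P_2 be probability distributions on T with P_1 strictly positive and P_1 ≠ P_2. Define the acceptance probability a(x) = min(1, P_2(x)/P_1(x)) and the residual distribution R(y) = max(P_2(y) − P_1(y), 0) / ∑_{z ∈ T} max(P_2(z) − P_1(z), 0). Then the output law of speculative sampling equals the target distribution: for every y ∈ T, P_1(y) · a(y) + (∑_{x ∈ T} P_1(x) · (1 − a(x))) · R(y) = P_2(y). -/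
open Finset

/-- **Correctness of speculative sampling.** With a strictly positive proposal `P₁`,
target `P₂ ≠ P₁`, acceptance probability `a x = min 1 (P₂ x / P₁ x)` and residual
distribution `R y = max (P₂ y − P₁ y) 0 / ∑ z, max (P₂ z − P₁ z) 0`, the output law of
one speculative-sampling step equals the target distribution:
`P₁ y · a y + (∑ x, P₁ x · (1 − a x)) · R y = P₂ y` for every `y`. -/
theorem speculative_sampling_correct
    {T : Type*} [Fintype T] [Nonempty T]
    (P₁ P₂ : T → ℝ)
    (hP₁pos : ∀ x, 0 < P₁ x) (hP₁sum : ∑ x, P₁ x = 1)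
    (hP₂nn : ∀ x, 0 ≤ P₂ x) (hP₂sum : ∑ x, P₂ x = 1)
    (hne : P₁ ≠ P₂)
    (a : T → ℝ) (ha : ∀ x, a x = min 1 (P₂ x / P₁ x))
    (R : T → ℝ)
    (hR : ∀ y, R y = max (P₂ y - P₁ y) 0 / ∑ z, max (P₂ z - P₁ z) 0) :
    ∀ y, P₁ y * a y + (∑ x, P₁ x * (1 - a x)) * R y = P₂ y := by
  have hmin : ∀ x, P₁ x * a x = min (P₁ x) (P₂ x) := by
    intro x
    rw [ha x, mul_min_of_nonneg _ _ (hP₁pos x).le, mul_one,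
      mul_div_cancel₀ _ (hP₁pos x).ne']
  have hrej : ∀ x, P₁ x * (1 - a x) = max (P₁ x - P₂ x) 0 := by
    intro x
    rw [mul_sub, mul_one, hmin x]
    rcases le_total (P₁ x) (P₂ x) with h | h
    · rw [min_eq_left h, max_eq_right (by linarith : P₁ x - P₂ x ≤ 0), sub_self]
    · rw [min_eq_right h, max_eq_left (by linarith : (0:ℝ) ≤ P₁ x - P₂ x)]
  have hsumeq : ∑ x, max (P₁ x - P₂ x) 0 = ∑ z, max (P₂ z - P₁ z) 0 := by
    have : ∑ x, (max (P₁ x - P₂ x) 0 - max (P₂ x - P₁ x) 0) = 0 := by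
      have h1 : ∀ x, max (P₁ x - P₂ x) 0 - max (P₂ x - P₁ x) 0 = P₁ x - P₂ x := by
        intro x
        rcases le_total (P₁ x) (P₂ x) with h | h
        · rw [max_eq_right (by linarith : P₁ x - P₂ x ≤ 0),
            max_eq_left (by linarith : (0:ℝ) ≤ P₂ x - P₁ x)]; ring
        · rw [max_eq_left (by linarith : (0:ℝ) ≤ P₁ x - P₂ x),
            max_eq_right (by linarith : P₂ x - P₁ x ≤ 0)]; ring
      rw [Finset.sum_congr rfl (fun x _ => h1 x), Finset.sum_sub_distrib,
        hP₁sum, hP₂sum, sub_self]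
    rw [Finset.sum_sub_distrib] at this
    linarith
  have hSpos : 0 < ∑ z, max (P₂ z - P₁ z) 0 := by
    apply Finset.sum_pos' (fun z _ => le_max_right (P₂ z - P₁ z) 0)
    by_contra hc
    push_neg at hc
    have hle : ∀ z, P₂ z ≤ P₁ z := by
      intro z
      have h2 := hc z (mem_univ z)
      have h3 := le_max_left (P₂ z - P₁ z) (0:ℝ)
      linarith
    have heq : ∀ z ∈ (univ : Finset T), P₂ z = P₁ z := by
      intro z _
      by_contra hzz
      have hlt : P₂ z < P₁ z := lt_of_le_of_ne (hle z) hzz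
      have := Finset.sum_lt_sum (fun i (_ : i ∈ (univ : Finset T)) => hle i)
        ⟨z, mem_univ z, hlt⟩
      rw [hP₁sum, hP₂sum] at this
      exact lt_irrefl _ this
    exact hne (funext fun z => (heq z (mem_univ z)).symm)
  intro y
  rw [hmin y, hR y, Finset.sum_congr rfl (fun x _ => hrej x), hsumeq,
    mul_div_assoc', mul_comm, mul_div_assoc, div_self hSpos.ne', mul_one]
  rcases le_total (P₁ y) (P₂ y) with h | h
  · rw [min_eq_left h, max_eq_left (by linarith : (0:ℝ) ≤ P₂ y - P₁ y)]; ring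
  · rw [min_eq_right h, max_eq_right (by linarith : P₂ y - P₁ y ≤ 0), add_zero]
end

section
/- Let T be a finite nonempty type, let n ≥ 2, and let P_1, …, P_n be probability distributions on T with P_1, …, P_{n−1} strictly positive. For each i with 1 ≤ i ≤ n−1 define the Markov kernel K_i on T by: if P_i = P_{i+1} then K_i(x, y) = 1 if y = x and 0 otherwise; if P_i ≠ P_{i+1} then K_i(x, y) = min(1, P_{i+1}(x)/P_i(x)) · [y = x] + (1 − min(1, P_{i+1}(x)/P_i(x))) · max(P_{i+1}(y) − P_i(y), 0) / ∑_{z ∈ T} max(P_{i+1}(z) − P_i(z), 0). Then sequentially applying the kernels starting from a sample of P_1 yields a sample of P_n: for every y ∈ T, ∑_{x_1, …, x_{n−1} ∈ T} P_1(x_1) · K_1(x_1, x_2) · K_2(x_2, x_3) ⋯ K_{n−1}(x_{n−1}, y) = P_n(y). -/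
open Finset
open scoped Classical

/-- `chain K i m x y` is the `(x, y)` entry of the composition of the `m` Markov kernels
`K i, K (i+1), …, K (i+m-1)`, i.e. the iterated sum
`∑_{z₁,…,z_{m-1}} K i x z₁ · K (i+1) z₁ z₂ ⋯ K (i+m-1) z_{m-1} y`. -/

lemma spec_step {T : Type*} [Fintype T] (P Q : T → ℝ)
    (hP : ∀ x, 0 < P x) (hQ : ∀ x, 0 ≤ Q x)
    (hPs : ∑ x, P x = 1) (hQs : ∑ x, Q x = 1)
    (K : T → T → ℝ)
    (hK : ∀ x y, K x y = if P = Q then (if y = x then 1 else 0)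
      else min 1 (Q x / P x) * (if y = x then 1 else 0)
        + (1 - min 1 (Q x / P x)) * (max (Q y - P y) 0 / ∑ z, max (Q z - P z) 0))
    (y : T) : ∑ x, P x * K x y = Q y := by
  by_cases hPQ : P = Q
  · simp only [hK, if_pos hPQ, mul_ite, mul_one, mul_zero]
    rw [Finset.sum_ite_eq Finset.univ y P]
    simp [congrFun hPQ y]
  · set S := ∑ z, max (Q z - P z) 0 with hS
    have hmin : ∀ x, P x * min 1 (Q x / P x) = min (P x) (Q x) := by
      intro x
      rw [mul_min_of_nonneg _ _ (hP x).le, mul_one,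
        mul_div_cancel₀ _ (hP x).ne']
    have hmax : ∀ x, P x * (1 - min 1 (Q x / P x)) = max (P x - Q x) 0 := by
      intro x
      rw [mul_sub, mul_one, hmin x]
      rcases le_total (P x) (Q x) with h | h
      · rw [min_eq_left h, max_eq_right (by linarith), sub_self]
      · rw [min_eq_right h, max_eq_left (by linarith)]
    have hSeq : S = ∑ z, max (P z - Q z) 0 := by
      have : ∑ z, (max (P z - Q z) 0 - max (Q z - P z) 0) = 0 := by
        have : ∀ z, max (P z - Q z) 0 - max (Q z - P z) 0 = P z - Q z := by
          intro z
          rcases le_total (P z) (Q z) with h | h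
          · rw [max_eq_right (by linarith), max_eq_left (by linarith)]; ring
          · rw [max_eq_left (by linarith), max_eq_right (by linarith)]; ring
        simp only [this, Finset.sum_sub_distrib, hPs, hQs]
        simp
      rw [Finset.sum_sub_distrib] at this
      linarith [this]
    have hSpos : 0 < S := by
      have hex : ∃ x, P x < Q x := by
        by_contra h
        push_neg at h
        apply hPQ
        funext x
        by_contra hx
        have hlt : Q x < P x := lt_of_le_of_ne (h x) (Ne.symm hx)
        have : ∑ z, Q z < ∑ z, P z :=
          Finset.sum_lt_sum (fun z _ => h z) ⟨x, Finset.mem_univ x, hlt⟩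
        rw [hPs, hQs] at this; exact lt_irrefl 1 this
      obtain ⟨x, hx⟩ := hex
      have h1 : 0 < max (Q x - P x) 0 := by
        rw [max_eq_left (by linarith)]; linarith
      have h2 : ∀ z ∈ Finset.univ, (0:ℝ) ≤ max (Q z - P z) 0 :=
        fun z _ => le_max_right _ _
      exact Finset.sum_pos' h2 ⟨x, Finset.mem_univ x, h1⟩
    simp only [hK, if_neg hPQ]
    have : ∀ x, P x * (min 1 (Q x / P x) * (if y = x then 1 else 0)
        + (1 - min 1 (Q x / P x)) * (max (Q y - P y) 0 / S))
      = min (P x) (Q x) * (if y = x then 1 else 0)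
        + max (P x - Q x) 0 * (max (Q y - P y) 0 / S) := by
      intro x
      rw [mul_add, ← mul_assoc, hmin, ← mul_assoc, hmax]
    simp only [this]
    rw [Finset.sum_add_distrib]
    have h1 : ∑ x, min (P x) (Q x) * (if y = x then 1 else 0) = min (P y) (Q y) := by
      simp [mul_ite, Finset.sum_ite_eq]
    have h2 : ∑ x, max (P x - Q x) 0 * (max (Q y - P y) 0 / S)
        = max (Q y - P y) 0 := by
      rw [← Finset.sum_mul, ← hSeq, mul_comm, div_mul_cancel₀ _ hSpos.ne']
    rw [h1, h2]
    rcases le_total (P y) (Q y) with h | h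
    · rw [min_eq_left h, max_eq_left (by linarith)]; ring
    · rw [min_eq_right h, max_eq_right (by linarith)]; ring


noncomputable def chain {T : Type*} [Fintype T] (K : ℕ → T → T → ℝ) :
    ℕ → ℕ → T → T → ℝ
  | _, 0, x, y => if y = x then 1 else 0
  | i, m + 1, x, y => ∑ z, K i x z * chain K (i + 1) m z y

/-- **Speculative sampling on `n` distributions.** If `K i` is the transition kernel of one
speculative-sampling step from proposal `P i` to target `P (i+1)` (the identity kernel when
`P i = P (i+1)`), then sequentially applying the kernels `K 1, …, K (n-1)` to a sample of
`P 1` yields a sample of `P n`: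
`∑_{x₁,…,x_{n-1}} P 1 x₁ · K 1 x₁ x₂ ⋯ K (n-1) x_{n-1} y = P n y` for every `y`. -/
theorem speculative_sampling_chain
    {T : Type*} [Fintype T] [Nonempty T]
    (n : ℕ) (hn : 2 ≤ n)
    (P : ℕ → T → ℝ)
    (hPnn : ∀ i, 1 ≤ i → i ≤ n → ∀ x, 0 ≤ P i x)
    (hPsum : ∀ i, 1 ≤ i → i ≤ n → ∑ x, P i x = 1)
    (hPpos : ∀ i, 1 ≤ i → i ≤ n - 1 → ∀ x, 0 < P i x)
    (K : ℕ → T → T → ℝ)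
    (hK : ∀ i, 1 ≤ i → i ≤ n - 1 → ∀ x y,
      K i x y =
        if P i = P (i + 1) then (if y = x then 1 else 0)
        else min 1 (P (i + 1) x / P i x) * (if y = x then 1 else 0)
          + (1 - min 1 (P (i + 1) x / P i x)) *
              (max (P (i + 1) y - P i y) 0 / ∑ z, max (P (i + 1) z - P i z) 0)) :
    ∀ y, (∑ x, P 1 x * chain K 1 (n - 1) x y) = P n y := by
  have key : ∀ m i, 1 ≤ i → i + m ≤ n → ∀ y,
      (∑ x, P i x * chain K i m x y) = P (i + m) y := by
    intro m
    induction m with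
    | zero =>
      intro i hi1 hin y
      simp [chain, mul_ite, Finset.sum_ite_eq]
    | succ m ih =>
      intro i hi1 hin y
      have hiub : i ≤ n - 1 := by omega
      have hstep : ∀ z, (∑ x, P i x * K i x z) = P (i + 1) z :=
        spec_step (P i) (P (i + 1)) (hPpos i hi1 hiub)
          (hPnn (i + 1) (by omega) (by omega))
          (hPsum i hi1 (by omega)) (hPsum (i + 1) (by omega) (by omega))
          (K i) (hK i hi1 hiub)
      have : (∑ x, P i x * chain K i (m + 1) x y)
          = ∑ z, (∑ x, P i x * K i x z) * chain K (i + 1) m z y := by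
        simp only [chain, Finset.mul_sum, Finset.sum_mul]
        rw [Finset.sum_comm]
        apply Finset.sum_congr rfl
        intro z _
        apply Finset.sum_congr rfl
        intro x _
        ring
      rw [this]
      simp only [hstep]
      have := ih (i + 1) (by omega) (by omega) y
      rw [this]
      congr 1
      omega
  have := key (n - 1) 1 le_rfl (by omega) 
  intro y
  rw [this y]
  congr 1
  omega
end

section
/- Let T be a finite nonempty type, let Q_1, …, Q_n be strictly positive probability distributions on T, and let λ_1, …, λ_n be real numbers with c := ∑_{i=1}^n λ_i > 0. Then the unique probability distribution P on T minimizing the linear combination ∑_{i=1}^n λ_i · D_KL(P‖Q_i) over all probability distributions on T is the weighted geometric-mean distribution P*(x) = (∏_{i=1}^n Q_i(x)^{λ_i/c}) / ∑_{y ∈ T} ∏_{i=1}^n Q_i(y)^{λ_i/c}. -/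
/-! With `G x = ∏ i, Q i x ^ (l i / c)` and `Z = ∑ y, G y` one has
`c * log (G x) = ∑ i, l i * log (Q i x)`, so for every probability distribution `P` the objective
`∑ i, l i * D(P‖Q i)` equals `c * D(P‖G / Z) - c * log Z`. Since `c > 0`, everything follows from
Gibbs' inequality `D(P‖S) ≥ 0`, with equality only at `P = S`, which in turn follows from
`D(P‖S) = ∑ x, S x * klFun (P x / S x)` and `klFun ≥ 0` with equality only at `1`. -/

open Finset Real InformationTheory

noncomputable def discreteKL {T : Type*} [Fintype T] (P S : T → ℝ) : ℝ :=
  ∑ x, P x * log (P x / S x)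

lemma mul_log_div_eq_mul_klFun_add (p : ℝ) {s : ℝ} (hs : s ≠ 0) :
    p * log (p / s) = s * klFun (p / s) + (p - s) := by
  rw [klFun_apply]
  field_simp
  ring

lemma mul_log_div_of_ne_zero (p : ℝ) {s : ℝ} (hs : s ≠ 0) :
    p * log (p / s) = p * log p - p * log s := by
  rcases eq_or_ne p 0 with rfl | hp
  · simp
  · rw [log_div hp hs, mul_sub]

lemma log_prod_rpow {ι : Type*} (s : Finset ι) {q : ι → ℝ} (hq : ∀ i ∈ s, 0 < q i) (w : ι → ℝ) :
    log (∏ i ∈ s, q i ^ w i) = ∑ i ∈ s, w i * log (q i) := by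
  rw [log_prod fun i hi => (rpow_pos_of_pos (hq i hi) _).ne']
  exact sum_congr rfl fun i hi => log_rpow (hq i hi) _

section discreteKL

variable {T : Type*} [Fintype T]

lemma discreteKL_eq_sum_klFun {P S : T → ℝ} (hS : ∀ x, S x ≠ 0) (hsum : ∑ x, P x = ∑ x, S x) :
    discreteKL P S = ∑ x, S x * klFun (P x / S x) := by
  simp only [discreteKL, fun x => mul_log_div_eq_mul_klFun_add (P x) (hS x), sum_add_distrib,
    sum_sub_distrib, hsum, sub_self, add_zero]

lemma discreteKL_nonneg {P S : T → ℝ} (hS : ∀ x, 0 < S x) (hP : ∀ x, 0 ≤ P x)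
    (hsum : ∑ x, P x = ∑ x, S x) : 0 ≤ discreteKL P S := by
  rw [discreteKL_eq_sum_klFun (fun x => (hS x).ne') hsum]
  exact sum_nonneg fun x _ => mul_nonneg (hS x).le (klFun_nonneg (div_nonneg (hP x) (hS x).le))

lemma eq_of_discreteKL_nonpos {P S : T → ℝ} (hS : ∀ x, 0 < S x) (hP : ∀ x, 0 ≤ P x)
    (hsum : ∑ x, P x = ∑ x, S x) (hKL : discreteKL P S ≤ 0) : P = S := by
  have hterm : ∀ x, 0 ≤ S x * klFun (P x / S x) := fun x =>
    mul_nonneg (hS x).le (klFun_nonneg (div_nonneg (hP x) (hS x).le))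
  rw [discreteKL_eq_sum_klFun (fun x => (hS x).ne') hsum] at hKL
  have hzero := (sum_eq_zero_iff_of_nonneg fun x _ => hterm x).1
    (le_antisymm hKL (sum_nonneg fun x _ => hterm x))
  funext x
  have hkl : klFun (P x / S x) = 0 :=
    (mul_eq_zero.1 (hzero x (mem_univ x))).resolve_left (hS x).ne'
  rw [klFun_eq_zero_iff (div_nonneg (hP x) (hS x).le), div_eq_one_iff_eq (hS x).ne'] at hkl
  exact hkl

lemma discreteKL_self {S : T → ℝ} (hS : ∀ x, S x ≠ 0) : discreteKL S S = 0 :=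
  sum_eq_zero fun x _ => by rw [div_self (hS x), log_one, mul_zero]

lemma discreteKL_eq_sub {P S : T → ℝ} (hS : ∀ x, S x ≠ 0) :
    discreteKL P S = ∑ x, P x * log (P x) - ∑ x, P x * log (S x) := by
  simp only [discreteKL, fun x => mul_log_div_of_ne_zero (P x) (hS x), sum_sub_distrib]

lemma sum_mul_discreteKL_eq {ι : Type*} (s : Finset ι) (P : T → ℝ) {Q : ι → T → ℝ}
    (hQ : ∀ i ∈ s, ∀ x, Q i x ≠ 0) (l : ι → ℝ) :
    ∑ i ∈ s, l i * discreteKL P (Q i) =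
      (∑ i ∈ s, l i) * ∑ x, P x * log (P x) - ∑ x, P x * ∑ i ∈ s, l i * log (Q i x) := by
  rw [sum_congr rfl fun i hi => by rw [discreteKL_eq_sub (hQ i hi)], sum_mul]
  simp only [mul_sub, sum_sub_distrib, mul_sum]
  congr 1
  rw [sum_comm]
  exact sum_congr rfl fun x _ => sum_congr rfl fun i _ => by ring

lemma discreteKL_div_sum_eq [Nonempty T] {P G : T → ℝ} (hG : ∀ x, 0 < G x)
    (hP : ∑ x, P x = 1) :
    discreteKL P (fun x => G x / ∑ y, G y) =
      ∑ x, P x * log (P x) - ∑ x, P x * log (G x) + log (∑ y, G y) := by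
  have hZ : 0 < ∑ y, G y := sum_pos (fun y _ => hG y) univ_nonempty
  rw [discreteKL_eq_sub fun x => (div_pos (hG x) hZ).ne']
  simp only [log_div (hG _).ne' hZ.ne', mul_sub, sum_sub_distrib, ← sum_mul, hP, one_mul]
  ring

lemma sum_mul_discreteKL_eq_geomMean {ι : Type*} [Fintype ι] [Nonempty T] {P : T → ℝ}
    (hP : ∑ x, P x = 1) {Q : ι → T → ℝ} (hQ : ∀ i x, 0 < Q i x) (l : ι → ℝ) {c : ℝ}
    (hc : c = ∑ i, l i) (hc0 : c ≠ 0) :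
    ∑ i, l i * discreteKL P (Q i) =
      c * discreteKL P (fun x => (∏ i, Q i x ^ (l i / c)) / ∑ y, ∏ i, Q i y ^ (l i / c)) -
        c * log (∑ y, ∏ i, Q i y ^ (l i / c)) := by
  have hG : ∀ x, 0 < ∏ i, Q i x ^ (l i / c) := fun x =>
    prod_pos fun i _ => rpow_pos_of_pos (hQ i x) _
  have hlogG : ∀ x, c * log (∏ i, Q i x ^ (l i / c)) = ∑ i, l i * log (Q i x) := fun x => by
    rw [log_prod_rpow _ (fun i _ => hQ i x), mul_sum]
    exact sum_congr rfl fun i _ => by field_simp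
  have hcross : c * ∑ x, P x * log (∏ i, Q i x ^ (l i / c)) =
      ∑ x, P x * ∑ i, l i * log (Q i x) := by
    rw [mul_sum]
    exact sum_congr rfl fun x _ => by rw [mul_left_comm, hlogG]
  rw [sum_mul_discreteKL_eq _ P (fun i _ x => (hQ i x).ne'), discreteKL_div_sum_eq hG hP, ← hc,
    mul_add, mul_sub, hcross]
  ring

end discreteKL

theorem linear_combination_KL_optimality_general
    {T : Type*} [Fintype T] [Nonempty T] {n : ℕ}
    (Q : Fin n → T → ℝ) (l : Fin n → ℝ) (c : ℝ)
    (hQpos : ∀ i x, 0 < Q i x)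
    (hc : c = ∑ i, l i) (hcpos : 0 < c)
    (Pstar : T → ℝ)
    (hPstar : ∀ x, Pstar x =
      (∏ i, Q i x ^ (l i / c)) / ∑ y, ∏ i, Q i y ^ (l i / c)) :
    ((∀ x, 0 ≤ Pstar x) ∧ ∑ x, Pstar x = 1) ∧
    (∀ P : T → ℝ, (∀ x, 0 ≤ P x) → ∑ x, P x = 1 →
      (∑ i, l i * ∑ x, Pstar x * Real.log (Pstar x / Q i x)) ≤
        (∑ i, l i * ∑ x, P x * Real.log (P x / Q i x))) ∧
    (∀ P : T → ℝ, (∀ x, 0 ≤ P x) → ∑ x, P x = 1 →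
      (∀ P' : T → ℝ, (∀ x, 0 ≤ P' x) → ∑ x, P' x = 1 →
        (∑ i, l i * ∑ x, P x * Real.log (P x / Q i x)) ≤
          (∑ i, l i * ∑ x, P' x * Real.log (P' x / Q i x))) →
      P = Pstar) := by
  have hG : ∀ x, 0 < ∏ i, Q i x ^ (l i / c) := fun x =>
    prod_pos fun i _ => rpow_pos_of_pos (hQpos i x) _
  have hZ : 0 < ∑ y, ∏ i, Q i y ^ (l i / c) := sum_pos (fun y _ => hG y) univ_nonempty
  have hPstar_eq : Pstar = fun x => (∏ i, Q i x ^ (l i / c)) / ∑ y, ∏ i, Q i y ^ (l i / c) :=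
    funext hPstar
  have hPstar_pos : ∀ x, 0 < Pstar x := fun x => hPstar x ▸ div_pos (hG x) hZ
  have hPstar_sum : ∑ x, Pstar x = 1 := by rw [hPstar_eq, ← sum_div, div_self hZ.ne']
  have hobjective : ∀ P : T → ℝ, ∑ x, P x = 1 → ∑ i, l i * discreteKL P (Q i) =
      c * discreteKL P Pstar - c * log (∑ y, ∏ i, Q i y ^ (l i / c)) := fun P hP => by
    rw [hPstar_eq]
    exact sum_mul_discreteKL_eq_geomMean hP hQpos l hc hcpos.ne'
  have hself : discreteKL Pstar Pstar = 0 := discreteKL_self fun x => (hPstar_pos x).ne'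
  refine ⟨⟨fun x => (hPstar_pos x).le, hPstar_sum⟩, fun P hP hP1 => ?_, fun P hP hP1 hPmin => ?_⟩
  · show ∑ i, l i * discreteKL Pstar (Q i) ≤ ∑ i, l i * discreteKL P (Q i)
    rw [hobjective _ hPstar_sum, hobjective P hP1, hself, mul_zero]
    exact sub_le_sub_right
      (mul_nonneg hcpos.le (discreteKL_nonneg hPstar_pos hP (hP1.trans hPstar_sum.symm))) _
  · have hle : ∑ i, l i * discreteKL P (Q i) ≤ ∑ i, l i * discreteKL Pstar (Q i) :=
      hPmin Pstar (fun x => (hPstar_pos x).le) hPstar_sum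
    rw [hobjective P hP1, hobjective _ hPstar_sum, hself, mul_zero, sub_le_sub_iff_right] at hle
    exact eq_of_discreteKL_nonpos hPstar_pos hP (hP1.trans hPstar_sum.symm)
      (nonpos_of_mul_nonpos_right hle hcpos)

/-- **Linear combination of KL divergences.** For strictly positive distributions
`Q 1, …, Q n` and weights `l 1, …, l n` with `c = ∑ i, l i > 0`, the unique probability
distribution minimizing `∑ i, l i · D_KL(P‖Q i)` is the weighted geometric mean
`Pstar x = (∏ i, Q i x ^ (l i / c)) / ∑ y, ∏ i, Q i y ^ (l i / c)`. -/
theorem linear_combination_KL_optimality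
    {T : Type*} [Fintype T] [Nonempty T] {n : ℕ}
    (Q : Fin n → T → ℝ) (l : Fin n → ℝ) (c : ℝ)
    (hQpos : ∀ i x, 0 < Q i x) (hQsum : ∀ i, ∑ x, Q i x = 1)
    (hc : c = ∑ i, l i) (hcpos : 0 < c)
    (Pstar : T → ℝ)
    (hPstar : ∀ x, Pstar x =
      (∏ i, Q i x ^ (l i / c)) / ∑ y, ∏ i, Q i y ^ (l i / c)) :
    ((∀ x, 0 ≤ Pstar x) ∧ ∑ x, Pstar x = 1) ∧
    (∀ P : T → ℝ, (∀ x, 0 ≤ P x) → ∑ x, P x = 1 →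
      (∑ i, l i * ∑ x, Pstar x * Real.log (Pstar x / Q i x)) ≤
        (∑ i, l i * ∑ x, P x * Real.log (P x / Q i x))) ∧
    (∀ P : T → ℝ, (∀ x, 0 ≤ P x) → ∑ x, P x = 1 →
      (∀ P' : T → ℝ, (∀ x, 0 ≤ P' x) → ∑ x, P' x = 1 →
        (∑ i, l i * ∑ x, P x * Real.log (P x / Q i x)) ≤
          (∑ i, l i * ∑ x, P' x * Real.log (P' x / Q i x))) →
      P = Pstar) :=
  linear_combination_KL_optimality_general Q l c hQpos hc hcpos Pstar hPstar
end
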